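/- For odd n ≥ 7, the decycling number of BS_n is at most n!/2 - 2·((n-1)/2)! + 1. -/

import Mathlib

def BS (n : ℕ) : SimpleGraph (Equiv.Perm (Fin n)) :=
  SimpleGraph.fromRel (fun u v => ∃ i j : Fin n, i < j ∧
    ((i : ℕ) = 0 ∨ (j : ℕ) = (i : ℕ) + 1) ∧ v = u * Equiv.swap i j)

/-- The decycling number of a finite graph. -/
noncomputable def decyclingNumber {V : Type*} [Fintype V] (G : SimpleGraph V) : ℕ :=
  sInf {k | ∃ D : Finset V, D.card = k ∧ (G.induce ((↑D : Set V)ᶜ)).IsAcyclic}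

open Equiv Finset

lemma BS_adj {n : ℕ} {u v : Equiv.Perm (Fin n)} (h : (BS n).Adj u v) :
    ∃ i j : Fin n, i ≠ j ∧ v = u * Equiv.swap i j := by
  rcases h with ⟨hne, ⟨i, j, hij, _, rfl⟩ | ⟨i, j, hij, _, he⟩⟩
  · exact ⟨i, j, hij.ne, rfl⟩
  · refine ⟨i, j, hij.ne, ?_⟩
    rw [he, mul_assoc, Equiv.swap_mul_self, mul_one]

lemma BS_adj_sign {n : ℕ} {u v : Equiv.Perm (Fin n)} (h : (BS n).Adj u v) :
    Equiv.Perm.sign v = - Equiv.Perm.sign u := by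
  obtain ⟨i, j, hij, rfl⟩ := BS_adj h
  rw [map_mul, Equiv.Perm.sign_swap hij, mul_neg, mul_one]

lemma common_nbr_dist {n : ℕ} {a p q : Equiv.Perm (Fin n)}
    (h1 : (BS n).Adj a p) (h2 : (BS n).Adj a q) :
    (p⁻¹ * q).support.card ≤ 4 := by
  obtain ⟨i1, j1, hij1, rfl⟩ := BS_adj h1
  obtain ⟨i2, j2, hij2, rfl⟩ := BS_adj h2
  have : (a * Equiv.swap i1 j1)⁻¹ * (a * Equiv.swap i2 j2)
      = Equiv.swap i1 j1 * Equiv.swap i2 j2 := by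
    rw [mul_inv_rev, Equiv.swap_inv, mul_assoc, ← mul_assoc a⁻¹, inv_mul_cancel, one_mul]
  rw [this]
  calc (Equiv.swap i1 j1 * Equiv.swap i2 j2).support.card
      ≤ ((Equiv.swap i1 j1).support ⊔ (Equiv.swap i2 j2).support).card :=
        Finset.card_le_card (Equiv.Perm.support_mul_le _ _)
    _ ≤ _ := by
        rw [Equiv.Perm.support_swap hij1, Equiv.Perm.support_swap hij2]
        refine (Finset.card_union_le _ _).trans ?_
        have := Finset.card_insert_le i1 ({j1} : Finset (Fin n))
        have := Finset.card_insert_le i2 ({j2} : Finset (Fin n))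
        simp only [Finset.card_singleton] at *
        omega

lemma acyclic_of_star {V : Type*} (G : SimpleGraph V) (f : V → V)
    (H : ∀ a b, G.Adj a b → (f a = b ∧ f b = b) ∨ (f b = a ∧ f a = a)) :
    G.IsAcyclic := by
  intro v c hc
  have h3 := hc.three_le_length
  cases c with
  | nil => simp at h3
  | @cons _ b _ h p =>
    rw [SimpleGraph.Walk.cons_isCycle_iff] at hc
    obtain ⟨hp, -⟩ := hc
    have hvb : v ≠ b := G.ne_of_adj h
    have hl : 2 ≤ p.length := by
      simp only [SimpleGraph.Walk.length_cons] at h3; omega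
    rcases H v b h with ⟨hfv, hfb⟩ | ⟨hfb, hfv⟩
    · -- v noncenter with f v = b
      obtain ⟨x, h1, q, hq⟩ := SimpleGraph.Walk.exists_eq_cons_of_ne hvb p.reverse
      have hx : x = b := by
        rcases H v x h1 with ⟨h1', -⟩ | ⟨-, h2'⟩
        · rw [← hfv, h1']
        · exact absurd (h2'.symm.trans hfv) hvb
      subst hx
      have hqp : q.IsPath := by
        have := hp.reverse; rw [hq] at this; exact this.of_cons
      have : q = SimpleGraph.Walk.nil := SimpleGraph.Walk.isPath_iff_eq_nil.mp hqp
      rw [this] at hq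
      have := congrArg SimpleGraph.Walk.length hq
      rw [SimpleGraph.Walk.length_reverse] at this
      simp at this; omega
    · -- b noncenter with f b = v
      obtain ⟨x, h1, q, hq⟩ := SimpleGraph.Walk.exists_eq_cons_of_ne (Ne.symm hvb) p
      have hx : x = v := by
        rcases H b x h1 with ⟨h1', -⟩ | ⟨-, h2'⟩
        · rw [← hfb, h1']
        · exact absurd (h2'.symm.trans hfb) (Ne.symm hvb)
      subst hx
      have hqp : q.IsPath := by rw [hq] at hp; exact hp.of_cons
      have : q = SimpleGraph.Walk.nil := SimpleGraph.Walk.isPath_iff_eq_nil.mp hqp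
      rw [this] at hq
      have := congrArg SimpleGraph.Walk.length hq
      simp at this; omega



lemma even_small_support {α : Type*} [Fintype α] [DecidableEq α] {σ : Equiv.Perm α}
    (hs : Equiv.Perm.sign σ = 1) (h4 : σ.support.card ≤ 4) :
    σ = 1 ∨ (σ.support.card = 3 ∧ σ ^ 3 = 1) ∨ (σ.support.card = 4 ∧ σ ^ 2 = 1) := by
  have hsum : σ.cycleType.sum = σ.support.card := Equiv.Perm.sum_cycleType σ
  have hsign : Equiv.Perm.sign σ = (-1 : ℤˣ) ^ (σ.cycleType.sum + Multiset.card σ.cycleType) :=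
    Equiv.Perm.sign_of_cycleType σ
  have heven : Even (σ.cycleType.sum + Multiset.card σ.cycleType) := by
    rw [hs] at hsign
    exact (neg_one_pow_eq_one_iff_even (by decide : (-1 : ℤˣ) ≠ 1)).mp hsign.symm
  have hcard2 : ∀ x ∈ σ.cycleType, 2 ≤ x := fun x hx => Equiv.Perm.two_le_of_mem_cycleType hx
  have hccle : Multiset.card σ.cycleType • 2 ≤ σ.cycleType.sum :=
    Multiset.card_nsmul_le_sum hcard2
  rw [smul_eq_mul] at hccle
  -- card of cycleType is 0, 1, or 2
  have h012 : Multiset.card σ.cycleType = 0 ∨ Multiset.card σ.cycleType = 1 ∨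
      Multiset.card σ.cycleType = 2 := by omega
  rcases h012 with hc | hc | hc
  · left
    exact Equiv.Perm.cycleType_eq_zero.mp (Multiset.card_eq_zero.mp hc)
  · -- one cycle, length 3 (parity)
    obtain ⟨a, ha⟩ := Multiset.card_eq_one.mp hc
    have ha2 : 2 ≤ a := hcard2 a (by simp [ha])
    have hsum3 : σ.cycleType.sum = a := by simp [ha]
    rw [hsum3, hc] at heven
    have hodd : Odd a := by
      rw [Nat.even_add_one] at heven
      exact Nat.not_even_iff_odd.mp heven
    obtain ⟨k, hk⟩ := hodd
    have hle : a ≤ 4 := by rw [hsum3] at hsum; omega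
    have ha3 : a = 3 := by omega
    have hord : orderOf σ = 3 := by
      rw [← Equiv.Perm.lcm_cycleType, ha, ha3]
      decide
    right; left
    refine ⟨by rw [← hsum, hsum3, ha3], ?_⟩
    rw [← hord]; exact pow_orderOf_eq_one σ
  · -- two cycles, both length 2
    obtain ⟨a, b, hab⟩ := Multiset.card_eq_two.mp hc
    have ha2 : 2 ≤ a := hcard2 a (by simp [hab])
    have hb2 : 2 ≤ b := hcard2 b (by simp [hab])
    have hsumab : σ.cycleType.sum = a + b := by simp [hab]
    have ha : a = 2 := by omega
    have hb : b = 2 := by omega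
    have hord : orderOf σ = 2 := by
      rw [← Equiv.Perm.lcm_cycleType, hab, ha, hb]
      decide
    right; right
    constructor
    · omega
    · rw [← hord]; exact pow_orderOf_eq_one σ



-- canonical pick
noncomputable def pkk {α : Type*} (d : α) (s : Finset α) : α := s.toList.headD d

lemma pick_mem {α : Type*} (d : α) {s : Finset α} (h : s.Nonempty) : pkk d s ∈ s := by
  unfold pkk
  cases hl : s.toList with
  | nil => exact absurd (Finset.toList_eq_nil.mp hl) h.ne_empty
  | cons a t =>
    have ha : a ∈ s.toList := by rw [hl]; exact List.mem_cons_self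
    simp only [List.headD_cons]
    exact Finset.mem_toList.mp ha

section
variable {n : ℕ}

noncomputable def pk (d : Fin n) (s : Finset (Fin n)) : Fin n := pkk d s

lemma pk_mem (d : Fin n) {s : Finset (Fin n)} (h : s.Nonempty) : pk d s ∈ s := pick_mem d h

-- the quotient-is-trivial lemma
lemma quot_eq {σ τ : Equiv.Perm (Fin n)} (hσ : Equiv.Perm.sign σ = 1)
    (hτ : Equiv.Perm.sign τ = 1) (hsupp : σ.support = τ.support)
    (t : Finset (Fin n)) (ht : t.card ≤ 2)
    (hfix : ∀ x, x ∉ t → (σ⁻¹ * τ) x = x) : σ = τ := by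
  set ρ := σ⁻¹ * τ with hρ
  have hρs : Equiv.Perm.sign ρ = 1 := by
    rw [hρ, map_mul, map_inv, hσ, hτ]; rfl
  have hsub : ρ.support ⊆ t := by
    intro x hx
    by_contra hxt
    exact (Equiv.Perm.mem_support.mp hx) (hfix x hxt)
  have hcard : ρ.support.card ≤ 2 := le_trans (Finset.card_le_card hsub) ht
  rcases even_small_support hρs (by omega) with h1 | ⟨h3, -⟩ | ⟨h4, -⟩
  · rw [hρ] at h1
    exact inv_mul_eq_one.mp h1
  · omega
  · omega

lemma F3_card (d : Fin n) :
    (Finset.univ.filter fun σ : Equiv.Perm (Fin n) =>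
        Equiv.Perm.sign σ = 1 ∧ σ.support.card = 3).card ≤ 2 * n.choose 3 := by
  classical
  set T3 : Finset ((_ : Finset (Fin n)) × Fin n) :=
    (Finset.univ.powersetCard 3).sigma (fun s => s.erase (pk d s)) with hT3
  have hmaps : ∀ σ ∈ (Finset.univ.filter fun σ : Equiv.Perm (Fin n) =>
      Equiv.Perm.sign σ = 1 ∧ σ.support.card = 3),
      (⟨σ.support, σ (pk d σ.support)⟩ : (_ : Finset (Fin n)) × Fin n) ∈ T3 := by
    intro σ hσ
    rw [Finset.mem_filter] at hσ
    obtain ⟨-, -, h3⟩ := hσ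
    have hne : σ.support.Nonempty := Finset.card_pos.mp (by omega)
    have hpm : pk d σ.support ∈ σ.support := pk_mem d hne
    rw [hT3, Finset.mem_sigma]
    refine ⟨Finset.mem_powersetCard.mpr ⟨Finset.subset_univ _, h3⟩, ?_⟩
    refine Finset.mem_erase.mpr ⟨?_, ?_⟩
    · exact (Equiv.Perm.mem_support.mp hpm)
    · exact Equiv.Perm.apply_mem_support.mpr hpm
  have hinj : Set.InjOn (fun σ : Equiv.Perm (Fin n) =>
      (⟨σ.support, σ (pk d σ.support)⟩ : (_ : Finset (Fin n)) × Fin n))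
      ((Finset.univ.filter fun σ : Equiv.Perm (Fin n) =>
        Equiv.Perm.sign σ = 1 ∧ σ.support.card = 3) : Set (Equiv.Perm (Fin n))) := by
    intro σ hσ τ hτ heq
    simp only [Finset.coe_filter, Set.mem_setOf_eq, Finset.mem_univ, true_and] at hσ hτ
    obtain ⟨hσ1, hσ3⟩ := hσ
    obtain ⟨hτ1, hτ3⟩ := hτ
    simp only [Sigma.mk.inj_iff, heq_iff_eq] at heq
    obtain ⟨hsupp, happ⟩ := heq
    have hne : σ.support.Nonempty := Finset.card_pos.mp (by omega)
    set a := pk d σ.support with ha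
    have hpm : a ∈ σ.support := pk_mem d hne
    have hpk : pk d τ.support = a := by rw [ha, hsupp]
    have happ' : σ a = τ a := by rw [happ, hpk]
    refine quot_eq hσ1 hτ1 hsupp (σ.support.erase a) ?_ ?_
    · rw [Finset.card_erase_of_mem hpm, hσ3]
    · intro x hx
      rw [Finset.mem_erase] at hx
      push_neg at hx
      by_cases hxa : x = a
      · subst hxa
        simp [Equiv.Perm.mul_apply, ← happ']
      · have hxs : x ∉ σ.support := hx hxa
        have hxt : x ∉ τ.support := by rwa [hsupp] at hxs
        have h1 : τ x = x := Equiv.Perm.notMem_support.mp hxt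
        have h2 : σ⁻¹ x = x := by
          rw [← Equiv.Perm.support_inv] at hxs
          exact Equiv.Perm.notMem_support.mp hxs
        simp [Equiv.Perm.mul_apply, h1, h2]
  calc _ ≤ T3.card := Finset.card_le_card_of_injOn _ hmaps hinj
    _ ≤ 2 * n.choose 3 := by
        rw [hT3, Finset.card_sigma]
        have : ∀ s ∈ Finset.univ.powersetCard (3:ℕ), (s.erase (pk d s)).card = 2 := by
          intro s hs
          obtain ⟨-, hcard⟩ := Finset.mem_powersetCard.mp hs
          have hne : s.Nonempty := Finset.card_pos.mp (by omega)
          rw [Finset.card_erase_of_mem (pk_mem d hne), hcard]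
        rw [Finset.sum_congr rfl this, Finset.sum_const, Finset.card_powersetCard,
          Finset.card_univ, Fintype.card_fin, smul_eq_mul, mul_comm]
end

section
variable {n : ℕ}

lemma F4_card (d : Fin n) :
    (Finset.univ.filter fun σ : Equiv.Perm (Fin n) =>
        Equiv.Perm.sign σ = 1 ∧ σ.support.card = 4 ∧ σ ^ 2 = 1).card ≤ 3 * n.choose 4 := by
  classical
  set T4 : Finset ((_ : Finset (Fin n)) × Fin n) :=
    (Finset.univ.powersetCard 4).sigma (fun s => s.erase (pk d s)) with hT4
  have hmaps : ∀ σ ∈ (Finset.univ.filter fun σ : Equiv.Perm (Fin n) =>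
      Equiv.Perm.sign σ = 1 ∧ σ.support.card = 4 ∧ σ ^ 2 = 1),
      (⟨σ.support, σ (pk d σ.support)⟩ : (_ : Finset (Fin n)) × Fin n) ∈ T4 := by
    intro σ hσ
    rw [Finset.mem_filter] at hσ
    obtain ⟨-, -, h4, -⟩ := hσ
    have hne : σ.support.Nonempty := Finset.card_pos.mp (by omega)
    have hpm : pk d σ.support ∈ σ.support := pk_mem d hne
    rw [hT4, Finset.mem_sigma]
    refine ⟨Finset.mem_powersetCard.mpr ⟨Finset.subset_univ _, h4⟩,
      Finset.mem_erase.mpr ⟨Equiv.Perm.mem_support.mp hpm,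
        Equiv.Perm.apply_mem_support.mpr hpm⟩⟩
  have hinj : Set.InjOn (fun σ : Equiv.Perm (Fin n) =>
      (⟨σ.support, σ (pk d σ.support)⟩ : (_ : Finset (Fin n)) × Fin n))
      ((Finset.univ.filter fun σ : Equiv.Perm (Fin n) =>
        Equiv.Perm.sign σ = 1 ∧ σ.support.card = 4 ∧ σ ^ 2 = 1) : Set (Equiv.Perm (Fin n))) := by
    intro σ hσ τ hτ heq
    simp only [Finset.coe_filter, Set.mem_setOf_eq, Finset.mem_univ, true_and] at hσ hτ
    obtain ⟨hσ1, hσ4, hσ2⟩ := hσ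
    obtain ⟨hτ1, hτ4, hτ2⟩ := hτ
    simp only [Sigma.mk.inj_iff, heq_iff_eq] at heq
    obtain ⟨hsupp, happ⟩ := heq
    have hne : σ.support.Nonempty := Finset.card_pos.mp (by omega)
    set a := pk d σ.support with ha
    have hpm : a ∈ σ.support := pk_mem d hne
    have hpk : pk d τ.support = a := by rw [ha, hsupp]
    have happ' : σ a = τ a := by rw [happ, hpk]
    have hba : σ a ≠ a := fun hcon => (Equiv.Perm.mem_support.mp hpm) hcon
    have hbs : σ a ∈ σ.support := Equiv.Perm.apply_mem_support.mpr hpm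
    have hσinv : σ⁻¹ = σ := by
      refine inv_eq_of_mul_eq_one_left ?_
      rw [← pow_two]; exact hσ2
    refine quot_eq hσ1 hτ1 hsupp ((σ.support.erase a).erase (σ a)) ?_ ?_
    · rw [Finset.card_erase_of_mem (Finset.mem_erase.mpr ⟨hba, hbs⟩),
        Finset.card_erase_of_mem hpm, hσ4]
    · intro x hx
      rw [Finset.mem_erase] at hx
      push_neg at hx
      by_cases hxb : x = σ a
      · subst hxb
        have hτb : τ (σ a) = a := by
          rw [happ', ← Equiv.Perm.mul_apply, ← pow_two, hτ2, Equiv.Perm.one_apply]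
        rw [Equiv.Perm.mul_apply, hτb, hσinv]
      · have hx' := hx hxb
        rw [Finset.mem_erase] at hx'
        push_neg at hx'
        by_cases hxa : x = a
        · subst hxa
          simp [Equiv.Perm.mul_apply, ← happ']
        · have hxs : x ∉ σ.support := hx' hxa
          have hxt : x ∉ τ.support := by rwa [hsupp] at hxs
          have h1 : τ x = x := Equiv.Perm.notMem_support.mp hxt
          have h2 : σ⁻¹ x = x := by
            rw [← Equiv.Perm.support_inv] at hxs
            exact Equiv.Perm.notMem_support.mp hxs
          simp [Equiv.Perm.mul_apply, h1, h2]
  calc _ ≤ T4.card := Finset.card_le_card_of_injOn _ hmaps hinj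
    _ ≤ 3 * n.choose 4 := by
        rw [hT4, Finset.card_sigma]
        have : ∀ s ∈ Finset.univ.powersetCard (4:ℕ), (s.erase (pk d s)).card = 3 := by
          intro s hs
          obtain ⟨-, hcard⟩ := Finset.mem_powersetCard.mp hs
          have hne : s.Nonempty := Finset.card_pos.mp (by omega)
          rw [Finset.card_erase_of_mem (pk_mem d hne), hcard]
        rw [Finset.sum_congr rfl this, Finset.sum_const, Finset.card_powersetCard,
          Finset.card_univ, Fintype.card_fin, smul_eq_mul, mul_comm]

lemma ball_bound (d : Fin n) :
    (Finset.univ.filter fun σ : Equiv.Perm (Fin n) =>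
        Equiv.Perm.sign σ = 1 ∧ σ.support.card ≤ 4).card
      ≤ 1 + 2 * n.choose 3 + 3 * n.choose 4 := by
  classical
  have hsub : (Finset.univ.filter fun σ : Equiv.Perm (Fin n) =>
      Equiv.Perm.sign σ = 1 ∧ σ.support.card ≤ 4)
      ⊆ ({1} : Finset (Equiv.Perm (Fin n)))
        ∪ (Finset.univ.filter fun σ => Equiv.Perm.sign σ = 1 ∧ σ.support.card = 3)
        ∪ (Finset.univ.filter fun σ =>
            Equiv.Perm.sign σ = 1 ∧ σ.support.card = 4 ∧ σ ^ 2 = 1) := by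
    intro σ hσ
    rw [Finset.mem_filter] at hσ
    obtain ⟨-, hs1, hs4⟩ := hσ
    rcases even_small_support hs1 hs4 with h1 | ⟨h3, -⟩ | ⟨h4, h2⟩
    · simp [h1]
    · simp only [Finset.mem_union, Finset.mem_filter, Finset.mem_univ, true_and]
      exact Or.inl (Or.inr ⟨hs1, h3⟩)
    · simp only [Finset.mem_union, Finset.mem_filter, Finset.mem_univ, true_and]
      exact Or.inr ⟨hs1, h4, h2⟩
  refine (Finset.card_le_card hsub).trans ?_
  refine (Finset.card_union_le _ _).trans ?_
  have h1 := Finset.card_union_le ({1} : Finset (Equiv.Perm (Fin n)))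
    (Finset.univ.filter fun σ : Equiv.Perm (Fin n) =>
      Equiv.Perm.sign σ = 1 ∧ σ.support.card = 3)
  have h2 := F3_card d
  have h3 := F4_card d
  simp only [Finset.card_singleton] at h1
  omega
end


lemma bracket_le {n : ℕ} (hn : 7 ≤ n) :
    2 * (1 + 2 * n.choose 3 + 3 * n.choose 4) ≤ n ^ 4 := by
  have h3 : 6 * n.choose 3 ≤ n ^ 3 := by
    rw [Nat.choose_eq_descFactorial_div_factorial]
    calc 6 * (n.descFactorial 3 / Nat.factorial 3) ≤ n.descFactorial 3 := by
          rw [show Nat.factorial 3 = 6 from rfl, mul_comm]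
          exact Nat.div_mul_le_self _ 6
      _ ≤ n ^ 3 := Nat.descFactorial_le_pow n 3
  have h4 : 24 * n.choose 4 ≤ n ^ 4 := by
    rw [Nat.choose_eq_descFactorial_div_factorial]
    calc 24 * (n.descFactorial 4 / Nat.factorial 4) ≤ n.descFactorial 4 := by
          rw [show Nat.factorial 4 = 24 from rfl, mul_comm]
          exact Nat.div_mul_le_self _ 24
      _ ≤ n ^ 4 := Nat.descFactorial_le_pow n 4
  have h34 : n ^ 3 ≤ n ^ 4 := Nat.pow_le_pow_right (by omega) (by omega)
  have h24 : 24 ≤ n ^ 4 := le_trans (by norm_num) (Nat.pow_le_pow_left hn 4)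
  have key : 12 * (2 * (1 + 2 * n.choose 3 + 3 * n.choose 4)) ≤ 12 * n ^ 4 := by
    have e : 12 * (2 * (1 + 2 * n.choose 3 + 3 * n.choose 4))
        = 24 + 8 * (6 * n.choose 3) + 3 * (24 * n.choose 4) := by ring
    rw [e]
    omega
  omega

lemma arith_main (m : ℕ) (hm : 3 ≤ m) :
    (2 * m.factorial - 1) * (1 + 2 * (2*m+1).choose 3 + 3 * (2*m+1).choose 4) * 2
      ≤ (2*m+1).factorial := by
  by_cases hm5 : m ≤ 4
  · interval_cases m
    · decide
    · decide
  · push_neg at hm5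
    set n := 2*m+1 with hn
    have hn7 : 7 ≤ n := by omega
    have hbr := bracket_le hn7
    have hfact : m.factorial * (m+1)^(m+1) ≤ n.factorial := by
      have h := @Nat.factorial_mul_pow_le_factorial m (m+1)
      have : m + (m+1) = n := by omega
      rwa [this] at h
    have hpow : 2 * n ^ 4 ≤ (m+1)^(m+1) := by
      have h32 : 32 ≤ (m+1)^(m-3) := by
        calc (32:ℕ) ≤ 6 ^ 2 := by norm_num
          _ ≤ 6 ^ (m-3) := Nat.pow_le_pow_right (by norm_num) (by omega)
          _ ≤ (m+1)^(m-3) := Nat.pow_le_pow_left (by omega) _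
      calc 2 * n ^ 4 ≤ 2 * (2*(m+1)) ^ 4 := by
            have : n ≤ 2*(m+1) := by omega
            exact Nat.mul_le_mul_left 2 (Nat.pow_le_pow_left this 4)
        _ = 32 * (m+1)^4 := by ring
        _ ≤ (m+1)^(m-3) * (m+1)^4 := Nat.mul_le_mul_right _ h32
        _ = (m+1)^(m+1) := by rw [← pow_add]; congr 1; omega
    calc (2 * m.factorial - 1) * (1 + 2 * n.choose 3 + 3 * n.choose 4) * 2
        ≤ (2 * m.factorial) * (1 + 2 * n.choose 3 + 3 * n.choose 4) * 2 := by
          exact Nat.mul_le_mul_right _ (Nat.mul_le_mul_right _ (Nat.sub_le _ _))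
      _ = m.factorial * (2 * (2 * (1 + 2 * n.choose 3 + 3 * n.choose 4))) := by ring
      _ ≤ m.factorial * (2 * n ^ 4) := by
          exact Nat.mul_le_mul_left _ (Nat.mul_le_mul_left _ hbr)
      _ ≤ m.factorial * (m+1)^(m+1) := Nat.mul_le_mul_left _ hpow
      _ ≤ n.factorial := hfact


/-- For odd n ≥ 7, the decycling number of BS_n is at most n!/2 - 2·((n-1)/2)! + 1. -/
theorem BS_decycling_upper_odd (n : ℕ) (hn : 7 ≤ n) (ho : Odd n) :
    decyclingNumber (BS n) ≤ Nat.factorial n / 2 - 2 * Nat.factorial ((n - 1) / 2) + 1 := by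
  classical
  obtain ⟨m, hm⟩ := ho
  have hm3 : 3 ≤ m := by omega
  have hd : (n - 1) / 2 = m := by omega
  rw [hd]
  -- the even permutations
  set E : Finset (Equiv.Perm (Fin n)) :=
    Finset.univ.filter (fun σ => Equiv.Perm.sign σ = 1) with hE
  haveI : Nontrivial (Fin n) := Fin.nontrivial_iff_two_le.mpr (by omega)
  have hEcard : 2 * E.card = n.factorial := by
    have h1 : 2 * Fintype.card (alternatingGroup (Fin n)) = Fintype.card (Equiv.Perm (Fin n)) :=
      two_mul_card_alternatingGroup
    have h2 : Fintype.card (Equiv.Perm (Fin n)) = n.factorial := by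
      rw [Fintype.card_perm, Fintype.card_fin]
    have h3 : Fintype.card (alternatingGroup (Fin n)) = E.card := by
      rw [hE]
      rw [Fintype.card_subtype]
      congr 1
      ext σ
      simp [Equiv.Perm.mem_alternatingGroup]
    rw [← h2, ← h1, h3]
  -- the family of spread-out subsets of E
  set good : Finset (Equiv.Perm (Fin n)) → Prop :=
    fun S => S ⊆ E ∧ ∀ p ∈ S, ∀ q ∈ S, p ≠ q → 5 ≤ ((p⁻¹ * q).support.card) with hgood
  have hgooddec : DecidablePred good := fun S => by rw [hgood]; infer_instance
  set 𝒮 : Finset (Finset (Equiv.Perm (Fin n))) := Finset.univ.filter good with h𝒮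
  have h𝒮ne : 𝒮.Nonempty := ⟨∅, by simp [h𝒮, hgood]⟩
  obtain ⟨S, hS𝒮, hSmax⟩ := Finset.exists_max_image 𝒮 Finset.card h𝒮ne
  rw [h𝒮, Finset.mem_filter, hgood] at hS𝒮
  obtain ⟨-, hSE, hSdist⟩ := hS𝒮
  -- coverage
  have hcover : ∀ q ∈ E, ∃ p ∈ S, ((p⁻¹ * q).support.card ≤ 4) := by
    intro q hq
    by_contra hcon
    push_neg at hcon
    have hqS : q ∉ S := by
      intro hqs
      have := hcon q hqs
      simp at this
    have hins : insert q S ∈ 𝒮 := by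
      rw [h𝒮, Finset.mem_filter, hgood]
      refine ⟨Finset.mem_univ _, ?_, ?_⟩
      · intro x hx
        rcases Finset.mem_insert.mp hx with rfl | hx
        · exact hq
        · exact hSE hx
      · intro p hp r hr hpr
        have key : ∀ r ∈ S, 5 ≤ ((q⁻¹ * r).support.card) ∧ 5 ≤ ((r⁻¹ * q).support.card) := by
          intro r hr
          have h5 := hcon r hr
          constructor
          · rw [← Equiv.Perm.support_inv, mul_inv_rev, inv_inv]; omega
          · omega
        rcases Finset.mem_insert.mp hp with hp1 | hp1
        · rcases Finset.mem_insert.mp hr with hr1 | hr1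
          · exact absurd (hp1.trans hr1.symm) hpr
          · subst hp1; exact (key r hr1).1
        · rcases Finset.mem_insert.mp hr with hr1 | hr1
          · subst hr1; exact (key p hp1).2
          · exact hSdist p hp1 r hr1 hpr
    have := hSmax _ hins
    rw [Finset.card_insert_of_notMem hqS] at this
    omega
  -- counting
  set B : ℕ := 1 + 2 * n.choose 3 + 3 * n.choose 4 with hB
  have hball : ∀ p ∈ S, (E.filter fun q => (p⁻¹ * q).support.card ≤ 4).card ≤ B := by
    intro p hp
    have hinj : Set.InjOn (fun q => p⁻¹ * q)
        ((E.filter fun q => (p⁻¹ * q).support.card ≤ 4) : Set (Equiv.Perm (Fin n))) := by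
      intro x _ y _ hxy
      exact mul_left_cancel hxy
    have hmaps : ∀ q ∈ (E.filter fun q => (p⁻¹ * q).support.card ≤ 4),
        p⁻¹ * q ∈ (Finset.univ.filter fun σ : Equiv.Perm (Fin n) =>
          Equiv.Perm.sign σ = 1 ∧ σ.support.card ≤ 4) := by
      intro q hq
      rw [Finset.mem_filter] at hq
      obtain ⟨hqE, hq4⟩ := hq
      rw [hE, Finset.mem_filter] at hqE
      have hpE : Equiv.Perm.sign p = 1 := by
        have := hSE hp
        rw [hE, Finset.mem_filter] at this
        exact this.2
      refine Finset.mem_filter.mpr ⟨Finset.mem_univ _, ?_, hq4⟩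
      rw [map_mul, map_inv, hpE, hqE.2]
      rfl
    calc (E.filter fun q => (p⁻¹ * q).support.card ≤ 4).card
        ≤ _ := Finset.card_le_card_of_injOn _ hmaps hinj
      _ ≤ B := ball_bound ⟨0, by omega⟩
  have hEle : E.card ≤ S.card * B := by
    have hsub : E ⊆ S.biUnion (fun p => E.filter fun q => (p⁻¹ * q).support.card ≤ 4) := by
      intro q hq
      obtain ⟨p, hp, hd4⟩ := hcover q hq
      exact Finset.mem_biUnion.mpr ⟨p, hp, Finset.mem_filter.mpr ⟨hq, hd4⟩⟩
    calc E.card ≤ _ := Finset.card_le_card hsub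
      _ ≤ ∑ p ∈ S, (E.filter fun q => (p⁻¹ * q).support.card ≤ 4).card :=
          Finset.card_biUnion_le
      _ ≤ ∑ p ∈ S, B := Finset.sum_le_sum hball
      _ = S.card * B := by rw [Finset.sum_const, smul_eq_mul]
  -- lower bound on S.card
  have hnm : n = 2 * m + 1 := by omega
  have harith : (2 * m.factorial - 1) * B * 2 ≤ n.factorial := by
    rw [hB, hnm]
    exact arith_main m hm3
  have hScard : 2 * m.factorial - 1 ≤ S.card := by
    have hB1 : 1 ≤ B := by rw [hB]; omega
    have h1 : (2 * m.factorial - 1) * B ≤ E.card := by omega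
    have h2 : (2 * m.factorial - 1) * B ≤ S.card * B := le_trans h1 hEle
    exact Nat.le_of_mul_le_mul_right h2 (by omega)
  obtain ⟨S', hS'S, hS'card⟩ := Finset.exists_subset_card_eq hScard
  have hS'E : S' ⊆ E := hS'S.trans hSE
  -- the decycling set
  set D : Finset (Equiv.Perm (Fin n)) := E \ S' with hD
  have hDcard : D.card = E.card - (2 * m.factorial - 1) := by
    rw [hD, Finset.card_sdiff_of_subset hS'E, hS'card]
  -- acyclicity
  have hacyc : ((BS n).induce ((↑D : Set (Equiv.Perm (Fin n)))ᶜ)).IsAcyclic := by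
    set V' := ((↑D : Set (Equiv.Perm (Fin n)))ᶜ : Set (Equiv.Perm (Fin n))) with hV'
    -- membership facts
    have hmem : ∀ x : V', Equiv.Perm.sign (x : Equiv.Perm (Fin n)) = 1 →
        (x : Equiv.Perm (Fin n)) ∈ S' := by
      intro x hx
      have hp : (x : Equiv.Perm (Fin n)) ∉ D := x.2
      rw [hD, Finset.mem_sdiff] at hp
      push_neg at hp
      exact hp (Finset.mem_filter.mpr ⟨Finset.mem_univ _, hx⟩)
    -- unique neighbor for odd vertices
    have huniq : ∀ (b y z : V'), Equiv.Perm.sign (b : Equiv.Perm (Fin n)) ≠ 1 →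
        ((BS n).induce V').Adj b y → ((BS n).induce V').Adj b z → y = z := by
      intro b y z hb hy hz
      have hy' : (BS n).Adj (b : Equiv.Perm (Fin n)) y := hy
      have hz' : (BS n).Adj (b : Equiv.Perm (Fin n)) z := hz
      have hsy : Equiv.Perm.sign (y : Equiv.Perm (Fin n)) = 1 := by
        have := BS_adj_sign hy'
        rcases Int.units_eq_one_or (Equiv.Perm.sign (b : Equiv.Perm (Fin n))) with h | h
        · exact absurd h hb
        · rw [this, h]; rfl
      have hsz : Equiv.Perm.sign (z : Equiv.Perm (Fin n)) = 1 := by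
        have := BS_adj_sign hz'
        rcases Int.units_eq_one_or (Equiv.Perm.sign (b : Equiv.Perm (Fin n))) with h | h
        · exact absurd h hb
        · rw [this, h]; rfl
      have hyS := hmem y hsy
      have hzS := hmem z hsz
      have hd4 := common_nbr_dist hy' hz'
      by_contra hyz
      have hne : (y : Equiv.Perm (Fin n)) ≠ (z : Equiv.Perm (Fin n)) :=
        fun hcon => hyz (Subtype.ext hcon)
      have := hSdist _ (hS'S hyS) _ (hS'S hzS) hne
      omega
    -- the star center function
    set f : V' → V' := fun x =>
      if hs : Equiv.Perm.sign (x : Equiv.Perm (Fin n)) = 1 then x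
      else (if h : ∃ y, ((BS n).induce V').Adj x y then h.choose else x) with hf
    apply acyclic_of_star _ f
    intro a b hab
    have hab' : (BS n).Adj (a : Equiv.Perm (Fin n)) b := hab
    have hsign := BS_adj_sign hab'
    by_cases hsa : Equiv.Perm.sign (a : Equiv.Perm (Fin n)) = 1
    · -- a is a center
      right
      have hsb : Equiv.Perm.sign (b : Equiv.Perm (Fin n)) ≠ 1 := by
        rw [hsign, hsa]; decide
      constructor
      · rw [hf]
        simp only [hsb, dite_false]
        have hex : ∃ y, ((BS n).induce V').Adj b y := ⟨a, hab.symm⟩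
        rw [dif_pos hex]
        exact huniq b _ a hsb hex.choose_spec hab.symm
      · rw [hf]; simp [hsa]
    · -- b is a center
      left
      have hsb : Equiv.Perm.sign (b : Equiv.Perm (Fin n)) = 1 := by
        rcases Int.units_eq_one_or (Equiv.Perm.sign (a : Equiv.Perm (Fin n))) with h | h
        · exact absurd h hsa
        · rw [hsign, h]; rfl
      constructor
      · rw [hf]
        simp only [hsa, dite_false]
        have hex : ∃ y, ((BS n).induce V').Adj a y := ⟨b, hab⟩
        rw [dif_pos hex]
        exact huniq a _ b hsa hex.choose_spec hab
      · rw [hf]; simp [hsb]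
  -- conclude
  have hdle : decyclingNumber (BS n) ≤ D.card := by
    apply Nat.sInf_le
    exact ⟨D, rfl, hacyc⟩
  -- final arithmetic
  have hfle : 2 * m.factorial ≤ E.card := by
    have hB2 : 2 ≤ B := by
      have hc3 : 1 ≤ n.choose 3 := Nat.choose_pos (by omega)
      rw [hB]; omega
    have : (2 * m.factorial - 1) * 2 ≤ (2 * m.factorial - 1) * B :=
      Nat.mul_le_mul_left _ hB2
    have hm1 : 1 ≤ m.factorial := Nat.one_le_iff_ne_zero.mpr (Nat.factorial_ne_zero m)
    omega
  have hE2 : E.card = n.factorial / 2 := by omega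
  omega
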